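/- arXiv:2603.28839 — 2 statements merged into one kernel-verified Lean document; each statement's English description precedes it below -/
import Mathlib

section
/- Fix an integer n with 0 ≤ n ≤ N and assume 2α + β + 2ζ is not an integer. Let e ∈ ℝ^{N+1} be the vector with components e_ℓ = (−1)^ℓ (−n)_ℓ (n−2β−2ζ−1)_ℓ / (ℓ! (−N)_ℓ (N−2α−β−2ζ)_ℓ) for 0 ≤ ℓ ≤ N. Then e_0 = 1 (in particular e ≠ 0) and V e = (n−β−ζ−1)(β+ζ−n) e, i.e. e is an eigenvector of V with eigenvalue (n−β−ζ−1)(β+ζ−n). -/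
/-- The Pochhammer symbol `(a)_k = a(a+1)⋯(a+k−1)`. -/
noncomputable def poch (a : ℝ) (k : ℕ) : ℝ := ∏ i ∈ Finset.range k, (a + i)

/-- The matrix `V` with entries
`V_{m,n} = (n−β−ζ−1)(β+ζ−n)δ_{m,n} + n(N+1−n)(n−1−2α−β−2ζ+N)δ_{m,n−1}`. -/
noncomputable def Vmat (N : ℕ) (α β ζ : ℝ) : Matrix (Fin (N + 1)) (Fin (N + 1)) ℝ :=
  fun m n => (if m = n then ((n : ℝ) - β - ζ - 1) * (β + ζ - (n : ℝ)) else 0)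
    + (if (m : ℕ) + 1 = (n : ℕ) then
        (n : ℝ) * ((N : ℝ) + 1 - (n : ℝ)) * ((n : ℝ) - 1 - 2 * α - β - 2 * ζ + (N : ℝ))
      else 0)

lemma poch_succ (a : ℝ) (k : ℕ) : poch a (k + 1) = poch a k * (a + k) :=
  Finset.prod_range_succ _ _

lemma poch_zero (a : ℝ) : poch a 0 = 1 := Finset.prod_range_zero _

/-- For `0 ≤ n ≤ N` and `2α + β + 2ζ` not an integer, the vector with components
`e_ℓ = (−1)^ℓ (−n)_ℓ (n−2β−2ζ−1)_ℓ / (ℓ! (−N)_ℓ (N−2α−β−2ζ)_ℓ)` satisfies `e_0 = 1`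
(so `e ≠ 0`) and is an eigenvector of `V` with eigenvalue `(n−β−ζ−1)(β+ζ−n)`. -/
theorem evp_solution_e (N : ℕ) (hN : 1 ≤ N) (α β ζ : ℝ)
    (n : ℕ) (hn : n ≤ N)
    (hint : ∀ z : ℤ, 2 * α + β + 2 * ζ ≠ (z : ℝ))
    (e : Fin (N + 1) → ℝ)
    (he : ∀ ℓ : Fin (N + 1), e ℓ =
      (-1 : ℝ) ^ (ℓ : ℕ) * poch (-(n : ℝ)) ℓ * poch ((n : ℝ) - 2 * β - 2 * ζ - 1) ℓ
        / ((Nat.factorial ℓ : ℝ) * poch (-(N : ℝ)) ℓ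
            * poch ((N : ℝ) - 2 * α - β - 2 * ζ) ℓ)) :
    e ⟨0, Nat.succ_pos N⟩ = 1 ∧ e ≠ 0 ∧
    (Vmat N α β ζ).mulVec e
      = (((n : ℝ) - β - ζ - 1) * (β + ζ - (n : ℝ))) • e := by
  have h0 : e ⟨0, Nat.succ_pos N⟩ = 1 := by
    rw [he]
    simp [poch_zero, Nat.factorial]
  -- nonvanishing of denominators
  have hNpoch : ∀ k : ℕ, k ≤ N → poch (-(N : ℝ)) k ≠ 0 := by
    intro k hk
    unfold poch
    rw [Finset.prod_ne_zero_iff]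
    intro i hi
    rw [Finset.mem_range] at hi
    intro h
    have hiN : (i : ℝ) = (N : ℝ) := by linarith
    have : i = N := Nat.cast_injective hiN
    omega
  have hXpoch : ∀ k : ℕ, poch ((N : ℝ) - 2 * α - β - 2 * ζ) k ≠ 0 := by
    intro k
    unfold poch
    rw [Finset.prod_ne_zero_iff]
    intro i _ h
    apply hint ((N : ℤ) + (i : ℤ))
    push_cast
    linarith
  have hfac : ∀ k : ℕ, ((Nat.factorial k : ℕ) : ℝ) ≠ 0 := by
    intro k
    exact_mod_cast (Nat.factorial_ne_zero k)
  -- vanishing of e above n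
  have hev : ∀ ℓ : Fin (N + 1), n < (ℓ : ℕ) → e ℓ = 0 := by
    intro ℓ hℓ
    rw [he]
    have : poch (-(n : ℝ)) (ℓ : ℕ) = 0 := by
      unfold poch
      apply Finset.prod_eq_zero (Finset.mem_range.2 hℓ)
      push_cast
      ring
    rw [this]
    simp
  -- the key ratio identity
  have hkey : ∀ k : ℕ, (hk : k < N) →
      (((k : ℝ) + 1) * ((N : ℝ) + 1 - ((k : ℝ) + 1))
          * (((k : ℝ) + 1) - 1 - 2 * α - β - 2 * ζ + (N : ℝ)))
        * e ⟨k + 1, by omega⟩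
      = (((k : ℝ) - (n : ℝ)) * ((k : ℝ) + (n : ℝ) - 2 * β - 2 * ζ - 1))
        * e ⟨k, by omega⟩ := by
    intro k hk
    have hv1 : ((⟨k + 1, by omega⟩ : Fin (N + 1)) : ℕ) = k + 1 := rfl
    have hv0 : ((⟨k, by omega⟩ : Fin (N + 1)) : ℕ) = k := rfl
    rw [he, he, hv1, hv0]
    rw [poch_succ, poch_succ, poch_succ, poch_succ, Nat.factorial_succ]
    have d1 := hNpoch k (le_of_lt hk)
    have d2 := hXpoch k
    have d3 := hfac k
    have d4 : (-(N : ℝ) + (k : ℝ)) ≠ 0 := by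
      intro h
      have : (k : ℝ) = (N : ℝ) := by linarith
      have : k = N := Nat.cast_injective this
      omega
    have d5 : ((N : ℝ) - 2 * α - β - 2 * ζ + (k : ℝ)) ≠ 0 := by
      intro h
      apply hint ((N : ℤ) + (k : ℤ))
      push_cast
      linarith
    have d6 : ((k : ℝ) + 1) ≠ 0 := by positivity
    push_cast
    field_simp
    ring
  refine ⟨h0, ?_, ?_⟩
  · intro h
    rw [h] at h0
    simp at h0
  · funext m
    have hm : (m : ℕ) ≤ N := by omega
    simp only [Matrix.mulVec, dotProduct, Vmat, Pi.smul_apply, smul_eq_mul]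
    rcases lt_or_eq_of_le hm with hmN | hmN
    · -- m < N : two nonzero entries in row m
      set m' : Fin (N + 1) := ⟨(m : ℕ) + 1, by omega⟩ with hm'
      have hsum : ∑ j : Fin (N + 1),
          ((if m = j then ((j : ℝ) - β - ζ - 1) * (β + ζ - (j : ℝ)) else 0)
            + (if (m : ℕ) + 1 = (j : ℕ) then
                (j : ℝ) * ((N : ℝ) + 1 - (j : ℝ)) * ((j : ℝ) - 1 - 2 * α - β - 2 * ζ + (N : ℝ))
              else 0)) * e j
          = (((m : ℝ) - β - ζ - 1) * (β + ζ - (m : ℝ))) * e m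
            + ((m' : ℝ) * ((N : ℝ) + 1 - (m' : ℝ)) * ((m' : ℝ) - 1 - 2 * α - β - 2 * ζ + (N : ℝ)))
              * e m' := by
        simp only [add_mul, Finset.sum_add_distrib]
        congr 1
        · rw [Fintype.sum_eq_single m]
          · simp
          · intro j hj
            rw [if_neg (fun h => hj h.symm), zero_mul]
        · rw [Fintype.sum_eq_single m']
          · rw [if_pos rfl]
          · intro j hj
            rw [if_neg, zero_mul]
            intro h
            apply hj
            apply Fin.ext
            exact h.symm
      rw [hsum]
      have hv1 : ((m' : Fin (N + 1)) : ℝ) = (m : ℝ) + 1 := by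
        rw [hm']
        push_cast
        ring
      rw [hv1]
      have hkeym := hkey (m : ℕ) hmN
      have hmm : (⟨(m : ℕ), by omega⟩ : Fin (N + 1)) = m := by
        apply Fin.ext; rfl
      rw [hmm] at hkeym
      have hmm' : (⟨(m : ℕ) + 1, by omega⟩ : Fin (N + 1)) = m' := rfl
      rw [hmm'] at hkeym
      -- combine
      have : (((m : ℝ) + 1) * ((N : ℝ) + 1 - ((m : ℝ) + 1))
          * (((m : ℝ) + 1) - 1 - 2 * α - β - 2 * ζ + (N : ℝ))) * e m'
        = (((m : ℝ) - (n : ℝ)) * ((m : ℝ) + (n : ℝ) - 2 * β - 2 * ζ - 1)) * e m := hkeym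
      nlinarith [this, sq_nonneg (e m)]
    · -- m = N : only diagonal entry
      have hsum : ∑ j : Fin (N + 1),
          ((if m = j then ((j : ℝ) - β - ζ - 1) * (β + ζ - (j : ℝ)) else 0)
            + (if (m : ℕ) + 1 = (j : ℕ) then
                (j : ℝ) * ((N : ℝ) + 1 - (j : ℝ)) * ((j : ℝ) - 1 - 2 * α - β - 2 * ζ + (N : ℝ))
              else 0)) * e j
          = (((m : ℝ) - β - ζ - 1) * (β + ζ - (m : ℝ))) * e m := by
        simp only [add_mul, Finset.sum_add_distrib]
        have h2 : ∑ j : Fin (N + 1),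
            (if (m : ℕ) + 1 = (j : ℕ) then
                (j : ℝ) * ((N : ℝ) + 1 - (j : ℝ)) * ((j : ℝ) - 1 - 2 * α - β - 2 * ζ + (N : ℝ))
              else 0) * e j = 0 := by
          apply Finset.sum_eq_zero
          intro j _
          rw [if_neg, zero_mul]
          have : (j : ℕ) < N + 1 := j.isLt
          omega
        rw [h2, add_zero]
        rw [Fintype.sum_eq_single m]
        · simp
        · intro j hj
          rw [if_neg (fun h => hj h.symm), zero_mul]
      rw [hsum]
      rcases lt_or_eq_of_le hn with hnN | hnN
      · -- n < N = m : e m = 0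
        have : e m = 0 := hev m (by omega)
        rw [this]
        ring
      · -- n = N = m
        have : (m : ℝ) = (n : ℝ) := by
          rw [hmN, hnN]
        rw [this]
end

section
/- Assume that none of β+ρ, 2α+ρ, 2β+2ζ, 2α+β+2ζ is an integer. For 0 ≤ m, n ≤ N set α̂ = −β−ρ−1, β̂ = −β+ρ−2ζ−1, γ̂ = N−2α−ρ, and define e_m(ℓ) = [(−N)_m (N−2α−β−2ζ)_m / (m−2β−2ζ−1)_m] · (−1)^ℓ (−m)_ℓ (m−2β−2ζ−1)_ℓ / (ℓ! (−N)_ℓ (N−2α−β−2ζ)_ℓ) and f*_n(ℓ) = [(−β−ρ)_n / (n! (n−2α−ρ)_n)] · (−1)^ℓ (−n)_ℓ (n−2α−ρ)_ℓ / (−β−ρ)_ℓ. Then Σ_{ℓ=0}^{N} f*_n(ℓ) e_m(ℓ) = [(α̂+1)_n (−N)_m (β̂+γ̂+1)_m / (n! (n−N+γ̂)_n (m+α̂+β̂+1)_m)] · R_m(n; α̂, β̂, γ̂, N), i.e. this overlap coefficient is given by the Racah polynomial R_m(n; α̂, β̂, γ̂, N). -/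
/-- The Racah polynomial value
`R_i(x; α̂, β̂, γ̂, N) = Σ_{k=0}^{i} (−i)_k (i+α̂+β̂+1)_k (−x)_k (x+γ̂−N)_k /
  [(α̂+1)_k (β̂+γ̂+1)_k (−N)_k k!]`. -/
noncomputable def racah (ah bh ch : ℝ) (N i x : ℕ) : ℝ :=
  ∑ k ∈ Finset.range (i + 1),
    poch (-(i : ℝ)) k * poch ((i : ℝ) + ah + bh + 1) k * poch (-(x : ℝ)) k
      * poch ((x : ℝ) + ch - (N : ℝ)) k
      / (poch (ah + 1) k * poch (bh + ch + 1) k * poch (-(N : ℝ)) k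
          * (Nat.factorial k : ℝ))


lemma poch_ne_zero (a : ℝ) (k : ℕ) (h : ∀ i : ℕ, i < k → a + i ≠ 0) : poch a k ≠ 0 :=
  Finset.prod_ne_zero_iff.mpr fun i hi => h i (Finset.mem_range.mp hi)

lemma poch_neg_nat_zero (m ℓ : ℕ) (h : m < ℓ) : poch (-(m : ℝ)) ℓ = 0 :=
  Finset.prod_eq_zero (Finset.mem_range.mpr h) (by simp)

set_option maxHeartbeats 2000000 in
/-- The overlap coefficient `Σ_ℓ f*_n(ℓ) e_m(ℓ)` is given by a Racah
polynomial with parameters `α̂ = −β−ρ−1`, `β̂ = −β+ρ−2ζ−1`, `γ̂ = N−2α−ρ`. -/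
theorem overlap_racah_polynomial (N : ℕ) (hN : 1 ≤ N) (α β ζ ρ : ℝ)
    (h1 : ∀ z : ℤ, β + ρ ≠ (z : ℝ))
    (h2 : ∀ z : ℤ, 2 * α + ρ ≠ (z : ℝ))
    (h3 : ∀ z : ℤ, 2 * β + 2 * ζ ≠ (z : ℝ))
    (h4 : ∀ z : ℤ, 2 * α + β + 2 * ζ ≠ (z : ℝ))
    (ah bh ch : ℝ)
    (hah : ah = -β - ρ - 1) (hbh : bh = -β + ρ - 2 * ζ - 1) (hch : ch = (N : ℝ) - 2 * α - ρ)
    (m n : ℕ) (hm : m ≤ N) (hn : n ≤ N)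
    (e : Fin (N + 1) → ℝ) (fstar : Fin (N + 1) → ℝ)
    (he : ∀ ℓ : Fin (N + 1), e ℓ =
      (poch (-(N : ℝ)) m * poch ((N : ℝ) - 2 * α - β - 2 * ζ) m
          / poch ((m : ℝ) - 2 * β - 2 * ζ - 1) m)
        * ((-1 : ℝ) ^ (ℓ : ℕ) * poch (-(m : ℝ)) ℓ
            * poch ((m : ℝ) - 2 * β - 2 * ζ - 1) ℓ
          / ((Nat.factorial ℓ : ℝ) * poch (-(N : ℝ)) ℓ
              * poch ((N : ℝ) - 2 * α - β - 2 * ζ) ℓ)))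
    (hfs : ∀ ℓ : Fin (N + 1), fstar ℓ =
      (poch (-β - ρ) n / ((Nat.factorial n : ℝ) * poch ((n : ℝ) - 2 * α - ρ) n))
        * ((-1 : ℝ) ^ (ℓ : ℕ) * poch (-(n : ℝ)) ℓ * poch ((n : ℝ) - 2 * α - ρ) ℓ
          / poch (-β - ρ) ℓ)) :
    (∑ ℓ : Fin (N + 1), fstar ℓ * e ℓ)
      = (poch (ah + 1) n * poch (-(N : ℝ)) m * poch (bh + ch + 1) m
          / ((Nat.factorial n : ℝ) * poch ((n : ℝ) - (N : ℝ) + ch) n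
              * poch ((m : ℝ) + ah + bh + 1) m))
        * racah ah bh ch N m n := by
  subst hah hbh hch
  -- normalize the poch arguments on the RHS
  have e1 : (-β - ρ - 1 + 1 : ℝ) = -β - ρ := by ring
  have e2 : (-β + ρ - 2 * ζ - 1 + ((N : ℝ) - 2 * α - ρ) + 1 : ℝ)
      = (N : ℝ) - 2 * α - β - 2 * ζ := by ring
  have e3 : ((n : ℝ) - (N : ℝ) + ((N : ℝ) - 2 * α - ρ)) = (n : ℝ) - 2 * α - ρ := by ring
  have e4 : ((m : ℝ) + (-β - ρ - 1) + (-β + ρ - 2 * ζ - 1) + 1) =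
      (m : ℝ) - 2 * β - 2 * ζ - 1 := by ring
  have e5 : ∀ k : ℕ, ((n : ℝ) + ((N : ℝ) - 2 * α - ρ) - (N : ℝ)) = (n : ℝ) - 2 * α - ρ :=
    fun _ => by ring
  rw [racah, e1, e2, e3, e4, e5 0]
  -- nonzeroness facts
  have hfac : ∀ k : ℕ, (Nat.factorial k : ℝ) ≠ 0 :=
    fun k => Nat.cast_ne_zero.mpr k.factorial_ne_zero
  have hβρ : ∀ k : ℕ, poch (-β - ρ) k ≠ 0 := fun k =>
    poch_ne_zero _ _ fun i _ hz => h1 i (by push_cast; linarith)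
  have h2α : ∀ j k : ℕ, poch ((j : ℝ) - 2 * α - ρ) k ≠ 0 := fun j k =>
    poch_ne_zero _ _ fun i _ hz => h2 ((j : ℤ) + i) (by push_cast; linarith)
  have h2β : ∀ j k : ℕ, poch ((j : ℝ) - 2 * β - 2 * ζ - 1) k ≠ 0 := fun j k =>
    poch_ne_zero _ _ fun i _ hz => h3 ((j : ℤ) + i - 1) (by push_cast; linarith)
  have h4β : ∀ k : ℕ, poch ((N : ℝ) - 2 * α - β - 2 * ζ) k ≠ 0 := fun k =>
    poch_ne_zero _ _ fun i _ hz => h4 ((N : ℤ) + i) (by push_cast; linarith)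
  have hNN : ∀ k : ℕ, k ≤ N → poch (-(N : ℝ)) k ≠ 0 := by
    intro k hk
    refine poch_ne_zero _ _ fun i hi hz => ?_
    have : (i : ℝ) = (N : ℝ) := by linarith
    have := Nat.cast_inj (R := ℝ) |>.mp this
    omega
  -- Rewrite LHS as a sum over range (N+1)
  rw [show (∑ ℓ : Fin (N + 1), fstar ℓ * e ℓ) = ∑ ℓ ∈ Finset.range (N + 1),
      ((poch (-β - ρ) n / ((Nat.factorial n : ℝ) * poch ((n : ℝ) - 2 * α - ρ) n))
        * ((-1 : ℝ) ^ ℓ * poch (-(n : ℝ)) ℓ * poch ((n : ℝ) - 2 * α - ρ) ℓ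
          / poch (-β - ρ) ℓ))
      * ((poch (-(N : ℝ)) m * poch ((N : ℝ) - 2 * α - β - 2 * ζ) m
          / poch ((m : ℝ) - 2 * β - 2 * ζ - 1) m)
        * ((-1 : ℝ) ^ ℓ * poch (-(m : ℝ)) ℓ
            * poch ((m : ℝ) - 2 * β - 2 * ζ - 1) ℓ
          / ((Nat.factorial ℓ : ℝ) * poch (-(N : ℝ)) ℓ
              * poch ((N : ℝ) - 2 * α - β - 2 * ζ) ℓ))) from by
    rw [← Fin.sum_univ_eq_sum_range]
    exact Finset.sum_congr rfl fun ℓ _ => by rw [hfs, he]]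
  -- Extend the RHS sum to range (N+1)
  rw [Finset.sum_subset (Finset.range_subset_range.mpr (by omega : m + 1 ≤ N + 1))
      (fun k _ hk => by
        have hmk : m < k := by
          simp only [Finset.mem_range, not_lt] at hk; omega
        rw [poch_neg_nat_zero m k hmk]; ring)]
  rw [Finset.mul_sum]
  refine Finset.sum_congr rfl fun ℓ hℓ => ?_
  have hℓN : ℓ ≤ N := by simpa [Nat.lt_succ_iff] using Finset.mem_range.mp hℓ
  have hs : ((-1 : ℝ)) ^ ℓ * (-1 : ℝ) ^ ℓ = 1 := by
    rw [← pow_add, ← two_mul, pow_mul]; norm_num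
  generalize hT : ((-1 : ℝ)) ^ ℓ = t at hs ⊢
  linear_combination (poch (-β - ρ) n * poch (-(n:ℝ)) ℓ * poch ((n:ℝ) - 2*α - ρ) ℓ
    * poch (-(N:ℝ)) m * poch ((N:ℝ) - 2*α - β - 2*ζ) m * poch (-(m:ℝ)) ℓ
    * poch ((m:ℝ) - 2*β - 2*ζ - 1) ℓ
    * ((Nat.factorial n : ℝ))⁻¹ * (poch ((n:ℝ) - 2*α - ρ) n)⁻¹ * (poch (-β - ρ) ℓ)⁻¹
    * (poch ((m:ℝ) - 2*β - 2*ζ - 1) m)⁻¹ * ((Nat.factorial ℓ : ℝ))⁻¹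
    * (poch (-(N:ℝ)) ℓ)⁻¹ * (poch ((N:ℝ) - 2*α - β - 2*ζ) ℓ)⁻¹) * hs
end
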